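/- In F2[t_1, ..., t_8] with the Steenrod algebra action, the cohit space QP_4^{⊗8} (degree-4 homogeneous polynomials modulo hit elements) has dimension 238 over F2. -/

import Mathlib

open MvPolynomial

/-- The total Steenrod square on `F2[t_1,…,t_h]`: the algebra endomorphism `t_j ↦ t_j + t_j^2`.
Its degree-`(m+k)` homogeneous component on a degree-`m` homogeneous polynomial is `Sq^k`,
which on monomials agrees with the Cartan formula and `Sq^k(t_j^m) = C(m,k) t_j^{m+k}` mod 2. -/
noncomputable def sqT (h : ℕ) :
    MvPolynomial (Fin h) (ZMod 2) →ₐ[ZMod 2] MvPolynomial (Fin h) (ZMod 2) :=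
  aeval (fun j => X j + X j ^ 2)

/-- The hit subspace in degree `n`: the span of all `Sq^k f` with `1 ≤ k ≤ n` and
`f` homogeneous of degree `n − k` (i.e. the degree-`n` component of the total square of `f`). -/
noncomputable def hitSub (h n : ℕ) : Submodule (ZMod 2) (MvPolynomial (Fin h) (ZMod 2)) :=
  Submodule.span (ZMod 2)
    {g | ∃ k f, 1 ≤ k ∧ k ≤ n ∧ MvPolynomial.IsHomogeneous f (n - k) ∧
      g = MvPolynomial.homogeneousComponent n (sqT h f)}

/-- The cohit space `QP_n^{⊗h}`: degree-`n` homogeneous polynomials modulo hit elements. -/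
abbrev QP (h n : ℕ) :=
  ↥(homogeneousSubmodule (Fin h) (ZMod 2) n) ⧸
    ((hitSub h n).comap (homogeneousSubmodule (Fin h) (ZMod 2) n).subtype)

/-!
In degree 4 the only Steenrod squares that contribute are `Sq^1` on cubics and `Sq^2` on quadrics,
since `Sq^k` vanishes below degree `k`. On a quadric `Sq^2` is squaring, and `Sq^1` of a cubic monomial
with a repeated variable is again the square of a quadratic monomial. So the hit space is spanned
by the squares of the `C(h+1,2)` quadratic monomials and by `Sq^1` of the `C(h,3)` squarefree
cubic monomials. These polynomials have pairwise disjoint monomial supports (a square has even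
exponents, `Sq^1 (t_a t_b t_c)` has exponents `(2,1,1)` on exactly `{a,b,c}`), hence are linearly
independent, and `dim QP_4 = C(h+3,4) - C(h+1,2) - C(h,3)`, which is `330 - 36 - 56 = 238` for
`h = 8`.
-/

theorem Multiset.add_self_injective {α : Type*} [DecidableEq α] :
    Function.Injective fun m : Multiset α => m + m := fun m m' hm =>
  Multiset.ext.mpr fun a => by
    have := congrArg (Multiset.count a) hm
    simp only [Multiset.count_add] at this
    omega

theorem Finset.cons_val_ne_add_self {α : Type*} [DecidableEq α] {s : Finset α}
    (hs : 1 < s.card) (i : α) (m : Multiset α) : i ::ₘ s.val ≠ m + m := by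
  obtain ⟨j, hj, hji⟩ := Finset.exists_mem_ne hs i
  intro hm
  have := congrArg (Multiset.count j) hm
  rw [Multiset.count_cons_of_ne hji, Multiset.count_eq_one_of_mem s.nodup hj,
    Multiset.count_add] at this
  omega

theorem Finset.eq_of_cons_val_eq {α : Type*} [DecidableEq α] {s t : Finset α} {i j : α}
    (hi : i ∈ s) (hj : j ∈ t) (hst : i ::ₘ s.val = j ::ₘ t.val) : s = t := by
  have := congrArg Multiset.toFinset hst
  rwa [Multiset.toFinset_cons, Multiset.toFinset_cons, Finset.val_toFinset, Finset.val_toFinset,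
    Finset.insert_eq_of_mem hi, Finset.insert_eq_of_mem hj] at this

namespace MvPolynomial

variable {σ R : Type*}

instance [CommSemiring R] [Finite σ] (n : ℕ) : Module.Finite R (homogeneousSubmodule σ R n) :=
  Module.Finite.iff_fg.mpr (homogeneousSubmodule_fg σ R n)

theorem finrank_homogeneousSubmodule [CommRing R] [Nontrivial R] [Fintype σ] [DecidableEq σ]
    (n : ℕ) :
    Module.finrank R (homogeneousSubmodule σ R n) = (Fintype.card σ + n - 1).choose n := by
  have b : Module.Basis {d : σ →₀ ℕ | d.degree = n} R (homogeneousSubmodule σ R n) :=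
    (basisRestrictSupport R _).map
      (LinearEquiv.ofEq _ _ (homogeneousSubmodule_eq_finsupp_supported σ R n).symm)
  have e : Sym σ n ≃ {d : σ →₀ ℕ | d.degree = n} :=
    (Sym.equivNatSum σ n).trans (Equiv.subtypeEquivRight fun _ => Iff.rfl)
  rw [Module.finrank_eq_nat_card_basis b, ← Nat.card_congr e,
    Nat.card_eq_fintype_card, Sym.card_sym_eq_choose]

theorem IsHomogeneous.homogeneousComponent_eq_zero [CommSemiring R] {m n : ℕ}
    {p : MvPolynomial σ R} (hp : p.IsHomogeneous m) (hnm : n ≠ m) :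
    homogeneousComponent n p = 0 := by
  rw [homogeneousComponent_of_mem hp, if_neg hnm]

theorem linearIndependent_of_pairwise_disjoint_support [CommRing R] [NoZeroDivisors R]
    {ι : Type*} {v : ι → MvPolynomial σ R} (hv : ∀ i, v i ≠ 0)
    (hd : Pairwise fun i j => Disjoint (v i).support (v j).support) :
    LinearIndependent R v := by
  refine linearIndependent_iff'.mpr fun s g hsum i hi => ?_
  obtain ⟨d, hd_mem⟩ := Finset.nonempty_of_ne_empty (support_eq_empty.not.mpr (hv i))
  have hcoeff : ∀ j ≠ i, coeff d (v j) = 0 := fun j hj =>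
    notMem_support_iff.mp (Finset.disjoint_left.mp (hd hj.symm) hd_mem)
  have := congrArg (coeff d) hsum
  rw [coeff_sum, Finset.sum_eq_single i (fun j _ hj => by simp [hcoeff j hj])
    (fun h => absurd hi h), coeff_smul, smul_eq_mul, coeff_zero] at this
  exact (mul_eq_zero.mp this).resolve_right (mem_support_iff.mp hd_mem)

theorem prod_map_X [CommSemiring R] [DecidableEq σ] (m : Multiset σ) :
    (m.map X).prod = monomial (R := R) (Multiset.toFinsupp m) 1 := by
  induction m using Multiset.induction_on with
  | empty => simp
  | cons a m ih =>
    rw [Multiset.map_cons, Multiset.prod_cons, ih, ← Multiset.singleton_add,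
      Multiset.toFinsupp_add, Multiset.toFinsupp_singleton, X, monomial_mul, one_mul]

end MvPolynomial

open MvPolynomial Submodule

theorem sqT_X {h : ℕ} (i : Fin h) : sqT h (X i) = X i + X i ^ 2 := aeval_X _ i

theorem hitSub_le_homogeneousSubmodule (h n : ℕ) :
    hitSub h n ≤ homogeneousSubmodule (Fin h) (ZMod 2) n := by
  rw [hitSub, span_le]
  rintro _ ⟨k, f, -, -, -, rfl⟩
  exact homogeneousComponent_isHomogeneous n _

theorem finrank_QP_add_finrank_hitSub (h n : ℕ) :
    Module.finrank (ZMod 2) (QP h n) + Module.finrank (ZMod 2) (hitSub h n) =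
      Module.finrank (ZMod 2) (homogeneousSubmodule (Fin h) (ZMod 2) n) := by
  rw [← (comapSubtypeEquivOfLe (hitSub_le_homogeneousSubmodule h n)).finrank_eq]
  exact finrank_quotient_add_finrank _

namespace DegreeFour

variable {h : ℕ}

noncomputable def sqDeg4 (h : ℕ) :
    MvPolynomial (Fin h) (ZMod 2) →ₗ[ZMod 2] MvPolynomial (Fin h) (ZMod 2) :=
  homogeneousComponent 4 ∘ₗ (sqT h).toLinearMap

theorem sqDeg4_one : sqDeg4 h 1 = 0 := by
  simp only [sqDeg4, LinearMap.comp_apply, AlgHom.toLinearMap_apply, map_one]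
  exact (isHomogeneous_one _ _).homogeneousComponent_eq_zero (by norm_num)

theorem sqDeg4_X (a : Fin h) : sqDeg4 h (X a) = 0 := by
  simp only [sqDeg4, LinearMap.comp_apply, AlgHom.toLinearMap_apply, sqT_X, map_add,
    (isHomogeneous_X _ a).homogeneousComponent_eq_zero (by norm_num : 4 ≠ 1),
    (isHomogeneous_X_pow a 2).homogeneousComponent_eq_zero (by norm_num : 4 ≠ 2), add_zero]

theorem sqDeg4_X_mul_X (a b : Fin h) : sqDeg4 h (X a * X b) = (X a * X b) ^ 2 := by
  have hX := isHomogeneous_X (ZMod 2) a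
  have hY := isHomogeneous_X (ZMod 2) b
  have hsq : sqT h (X a * X b) =
      X a * X b + (X a ^ 2 * X b + X a * X b ^ 2) + (X a * X b) ^ 2 := by
    rw [map_mul, sqT_X, sqT_X]; ring
  simp only [sqDeg4, LinearMap.comp_apply, AlgHom.toLinearMap_apply, hsq, map_add,
    (hX.mul hY).homogeneousComponent_eq_zero (by norm_num : 4 ≠ 2),
    (((hX.pow 2).mul hY).add (hX.mul (hY.pow 2))).homogeneousComponent_eq_zero
      (by norm_num : 4 ≠ 3),
    homogeneousComponent_eq_self ((hX.mul hY).pow 2), zero_add]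

noncomputable def sqOneXXX (a b c : Fin h) : MvPolynomial (Fin h) (ZMod 2) :=
  X a ^ 2 * X b * X c + X a * X b ^ 2 * X c + X a * X b * X c ^ 2

theorem sqDeg4_X_mul_X_mul_X (a b c : Fin h) :
    sqDeg4 h (X a * X b * X c) = sqOneXXX a b c := by
  have hX := isHomogeneous_X (ZMod 2) a
  have hY := isHomogeneous_X (ZMod 2) b
  have hZ := isHomogeneous_X (ZMod 2) c
  have hsq : sqT h (X a * X b * X c) = X a * X b * X c + sqOneXXX a b c
      + (X a ^ 2 * X b ^ 2 * X c + X a ^ 2 * X b * X c ^ 2 + X a * X b ^ 2 * X c ^ 2)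
      + (X a * X b * X c) ^ 2 := by
    rw [map_mul, map_mul, sqT_X, sqT_X, sqT_X, sqOneXXX]; ring
  have h₄ : (sqOneXXX a b c).IsHomogeneous 4 :=
    ((((hX.pow 2).mul hY).mul hZ).add ((hX.mul (hY.pow 2)).mul hZ)).add
      ((hX.mul hY).mul (hZ.pow 2))
  have h₅ : (X a ^ 2 * X b ^ 2 * X c + X a ^ 2 * X b * X c ^ 2 + X a * X b ^ 2 * X c ^ 2 :
      MvPolynomial (Fin h) (ZMod 2)).IsHomogeneous 5 :=
    ((((hX.pow 2).mul (hY.pow 2)).mul hZ).add (((hX.pow 2).mul hY).mul (hZ.pow 2))).add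
      ((hX.mul (hY.pow 2)).mul (hZ.pow 2))
  simp only [sqDeg4, LinearMap.comp_apply, AlgHom.toLinearMap_apply, hsq, map_add,
    ((hX.mul hY).mul hZ).homogeneousComponent_eq_zero (by norm_num : 4 ≠ 3),
    homogeneousComponent_eq_self h₄, h₅.homogeneousComponent_eq_zero (by norm_num : 4 ≠ 5),
    (((hX.mul hY).mul hZ).pow 2).homogeneousComponent_eq_zero (by norm_num : 4 ≠ 6),
    zero_add, add_zero]

abbrev HitIndex (h : ℕ) := Sym (Fin h) 2 ⊕ {s : Finset (Fin h) // s.card = 3}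

noncomputable def hitBasis : HitIndex h → MvPolynomial (Fin h) (ZMod 2) :=
  Sum.elim (fun m => ((m : Multiset (Fin h)).map X).prod ^ 2)
    (fun s => ∑ i ∈ s.1, X i * ∏ j ∈ s.1, X j)

theorem hitBasis_inl (m : Sym (Fin h) 2) :
    hitBasis (.inl m) = monomial (Multiset.toFinsupp (m.1 + m.1)) 1 := by
  rw [← prod_map_X, Multiset.map_add, Multiset.prod_add, ← pow_two]
  rfl

theorem hitBasis_inr (s : {s : Finset (Fin h) // s.card = 3}) :
    hitBasis (.inr s) = ∑ i ∈ s.1, monomial (Multiset.toFinsupp (i ::ₘ s.1.val)) 1 := by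
  simp only [← prod_map_X, Multiset.map_cons, Multiset.prod_cons]
  rfl

theorem sq_X_mul_X_eq_hitBasis (a b : Fin h) :
    (X a * X b) ^ 2 = hitBasis (.inl ⟨{a, b}, rfl⟩) := by
  show _ = ((({a, b} : Multiset (Fin h)).map X).prod) ^ 2
  simp

theorem sqOneXXX_eq_hitBasis {a b c : Fin h} (hab : a ≠ b) (hac : a ≠ c) (hbc : b ≠ c) :
    sqOneXXX a b c =
      hitBasis (.inr ⟨{a, b, c}, Finset.card_eq_three.mpr ⟨a, b, c, hab, hac, hbc, rfl⟩⟩) := by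
  simp [hitBasis, Finset.sum_insert, Finset.prod_insert, hab, hac, hbc, sqOneXXX]
  ring

theorem mem_support_hitBasis_inl {m : Sym (Fin h) 2} {d : Fin h →₀ ℕ}
    (hd : d ∈ (hitBasis (.inl m)).support) : d = Multiset.toFinsupp (m.1 + m.1) := by
  rw [hitBasis_inl] at hd
  exact Finset.mem_singleton.mp (support_monomial_subset hd)

theorem mem_support_hitBasis_inr {s : {s : Finset (Fin h) // s.card = 3}} {d : Fin h →₀ ℕ}
    (hd : d ∈ (hitBasis (.inr s)).support) :
    ∃ i ∈ s.1, d = Multiset.toFinsupp (i ::ₘ s.1.val) := by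
  rw [hitBasis_inr] at hd
  obtain ⟨i, hi, hd⟩ := Finset.mem_biUnion.mp (support_sum hd)
  exact ⟨i, hi, Finset.mem_singleton.mp (support_monomial_subset hd)⟩

theorem hitBasis_ne_zero (i : HitIndex h) : hitBasis i ≠ 0 := by
  rcases i with m | s
  · rw [hitBasis_inl]
    exact monomial_eq_zero.not.mpr one_ne_zero
  · obtain ⟨i, hi⟩ := Finset.card_pos.mp (by rw [s.2]; norm_num)
    refine ne_zero_iff.mpr ⟨Multiset.toFinsupp (i ::ₘ s.1.val), ?_⟩
    simp only [hitBasis_inr, coeff_sum, coeff_monomial, Multiset.toFinsupp.injective.eq_iff,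
      Multiset.cons_inj_left, Finset.sum_ite_eq', if_pos hi]
    exact one_ne_zero

theorem pairwise_disjoint_support_hitBasis :
    Pairwise fun i j : HitIndex h => Disjoint (hitBasis i).support (hitBasis j).support := by
  intro i j hij
  refine Finset.disjoint_left.mpr fun d hi hj => hij ?_
  rcases i with m | s <;> rcases j with m' | s'
  · have := (mem_support_hitBasis_inl hi).symm.trans (mem_support_hitBasis_inl hj)
    exact congrArg _ (Subtype.ext (Multiset.add_self_injective
      (Multiset.toFinsupp.injective this)))
  · obtain ⟨i', -, rfl⟩ := mem_support_hitBasis_inr hj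
    exact absurd (Multiset.toFinsupp.injective (mem_support_hitBasis_inl hi))
      (Finset.cons_val_ne_add_self (by rw [s'.2]; norm_num) _ _)
  · obtain ⟨i, -, rfl⟩ := mem_support_hitBasis_inr hi
    exact absurd (Multiset.toFinsupp.injective (mem_support_hitBasis_inl hj))
      (Finset.cons_val_ne_add_self (by rw [s.2]; norm_num) _ _)
  · obtain ⟨i, his, rfl⟩ := mem_support_hitBasis_inr hi
    obtain ⟨j, hjs', hd⟩ := mem_support_hitBasis_inr hj
    exact congrArg _ (Subtype.ext (Finset.eq_of_cons_val_eq his hjs'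
      (Multiset.toFinsupp.injective hd)))

theorem linearIndependent_hitBasis : LinearIndependent (ZMod 2) (hitBasis (h := h)) :=
  linearIndependent_of_pairwise_disjoint_support hitBasis_ne_zero
    pairwise_disjoint_support_hitBasis

theorem sqOneXXX_mem_span (a b c : Fin h) :
    sqOneXXX a b c ∈ span (ZMod 2) (Set.range hitBasis) := by
  have two : (2 : MvPolynomial (Fin h) (ZMod 2)) = 0 := CharTwo.two_eq_zero
  by_cases hab : a = b
  · subst hab
    rw [show sqOneXXX a a c = (X a * X c) ^ 2 by
      unfold sqOneXXX; linear_combination (X a ^ 3 * X c) * two, sq_X_mul_X_eq_hitBasis]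
    exact subset_span ⟨_, rfl⟩
  by_cases hac : a = c
  · subst hac
    rw [show sqOneXXX a b a = (X a * X b) ^ 2 by
      unfold sqOneXXX; linear_combination (X a ^ 3 * X b) * two, sq_X_mul_X_eq_hitBasis]
    exact subset_span ⟨_, rfl⟩
  by_cases hbc : b = c
  · subst hbc
    rw [show sqOneXXX a b b = (X a * X b) ^ 2 by
      unfold sqOneXXX; linear_combination (X a * X b ^ 3) * two, sq_X_mul_X_eq_hitBasis]
    exact subset_span ⟨_, rfl⟩
  rw [sqOneXXX_eq_hitBasis hab hac hbc]
  exact subset_span ⟨_, rfl⟩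

theorem sqDeg4_prod_map_X_mem_span {m : Multiset (Fin h)} (hm : Multiset.card m ≤ 3) :
    sqDeg4 h (m.map X).prod ∈ span (ZMod 2) (Set.range hitBasis) := by
  obtain h0 | h1 | h2 | h3 : Multiset.card m = 0 ∨ Multiset.card m = 1 ∨
      Multiset.card m = 2 ∨ Multiset.card m = 3 := by omega
  · rw [Multiset.card_eq_zero.mp h0, Multiset.map_zero, Multiset.prod_zero, sqDeg4_one]
    exact zero_mem _
  · obtain ⟨a, rfl⟩ := Multiset.card_eq_one.mp h1
    rw [Multiset.map_singleton, Multiset.prod_singleton, sqDeg4_X]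
    exact zero_mem _
  · obtain ⟨a, b, rfl⟩ := Multiset.card_eq_two.mp h2
    rw [Multiset.insert_eq_cons, Multiset.map_cons, Multiset.map_singleton, Multiset.prod_cons,
      Multiset.prod_singleton, sqDeg4_X_mul_X, sq_X_mul_X_eq_hitBasis]
    exact subset_span ⟨_, rfl⟩
  · obtain ⟨a, b, c, rfl⟩ := Multiset.card_eq_three.mp h3
    rw [Multiset.insert_eq_cons, Multiset.insert_eq_cons, Multiset.map_cons, Multiset.map_cons,
      Multiset.map_singleton, Multiset.prod_cons, Multiset.prod_cons, Multiset.prod_singleton,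
      ← mul_assoc, sqDeg4_X_mul_X_mul_X]
    exact sqOneXXX_mem_span a b c

theorem hitSub_le_span : hitSub h 4 ≤ span (ZMod 2) (Set.range hitBasis) := by
  rw [hitSub, span_le]
  rintro _ ⟨k, f, hk, -, hf, rfl⟩
  change sqDeg4 h f ∈ _
  rw [f.as_sum, map_sum]
  refine sum_mem fun d hd => ?_
  have hdeg : d.degree = 4 - k := by
    rw [Finsupp.degree_eq_weight_one]
    exact hf (mem_support_iff.mp hd)
  rw [← mul_one (coeff d f), ← smul_eq_mul, ← smul_monomial, map_smul,
    ← Finsupp.toMultiset_toFinsupp d, ← prod_map_X]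
  refine smul_mem _ _ (sqDeg4_prod_map_X_mem_span ?_)
  rw [Finsupp.card_toMultiset]
  change d.degree ≤ 3
  omega

theorem span_le_hitSub : span (ZMod 2) (Set.range hitBasis) ≤ hitSub h 4 := by
  rw [span_le]
  rintro _ ⟨m | s, rfl⟩
  · obtain ⟨a, b, hm⟩ := Multiset.card_eq_two.mp m.2
    obtain rfl : m = ⟨{a, b}, rfl⟩ := Subtype.ext hm
    rw [← sq_X_mul_X_eq_hitBasis, ← sqDeg4_X_mul_X]
    exact subset_span ⟨2, X a * X b, by norm_num, by norm_num,
      (isHomogeneous_X _ a).mul (isHomogeneous_X _ b), rfl⟩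
  · obtain ⟨a, b, c, hab, hac, hbc, hs⟩ := Finset.card_eq_three.mp s.2
    obtain rfl : s = ⟨{a, b, c}, Finset.card_eq_three.mpr ⟨a, b, c, hab, hac, hbc, rfl⟩⟩ :=
      Subtype.ext hs
    rw [← sqOneXXX_eq_hitBasis hab hac hbc, ← sqDeg4_X_mul_X_mul_X]
    exact subset_span ⟨1, X a * X b * X c, le_rfl, by norm_num,
      ((isHomogeneous_X _ a).mul (isHomogeneous_X _ b)).mul (isHomogeneous_X _ c), rfl⟩

theorem hitSub_eq_span : hitSub h 4 = span (ZMod 2) (Set.range hitBasis) :=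
  le_antisymm hitSub_le_span span_le_hitSub

theorem finrank_hitSub :
    Module.finrank (ZMod 2) (hitSub h 4) = (h + 1).choose 2 + h.choose 3 := by
  rw [hitSub_eq_span, finrank_span_eq_card linearIndependent_hitBasis, Fintype.card_sum,
    Sym.card_sym_eq_choose, Fintype.card_finset_len, Fintype.card_fin]
  rfl

theorem finrank_QP (h : ℕ) :
    Module.finrank (ZMod 2) (QP h 4) + ((h + 1).choose 2 + h.choose 3) = (h + 3).choose 4 := by
  rw [← finrank_hitSub, finrank_QP_add_finrank_hitSub, finrank_homogeneousSubmodule,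
    Fintype.card_fin]
  rfl

end DegreeFour

/-- The cohit space `QP_4^{⊗8}` has dimension 238 over `F2`. -/
theorem dim_QP_8_4 : Module.finrank (ZMod 2) (QP 8 4) = 238 := by
  have := DegreeFour.finrank_QP 8
  norm_num [Nat.choose] at this
  omega
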